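/- arXiv:1309.3034 — 5 statements merged into one kernel-verified Lean document; each statement's English description precedes it below -/
import Mathlib

section
/- Let Ȳ ≠ 0 and A₄, B₄, C₄, D₄, E₄ be real numbers with B₄ > 0, Ȳ² + A₄ > 0, and Δ = B₄(Ȳ² + A₄) − E₄² > 0. Define M₄(K₁, K₂) = Ȳ²(K₁ − 1)² + K₁²A₄ + K₂²B₄ − 2K₁C₄ + 2K₂D₄ − 2K₁K₂E₄, and let K₁* = (B₄(Ȳ² + C₄) − D₄E₄)/Δ and K₂* = (E₄(Ȳ² + C₄) − D₄(Ȳ² + A₄))/Δ. Then the minimum value of M₄ over ℝ² equals Ȳ² − (Ȳ² + C₄)K₁* + D₄K₂*. -/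
/-!
Expanding, `M K₁ K₂ = a K₁² − 2 e K₁ K₂ + b K₂² − 2 u K₁ + 2 v K₂ + Ȳ²` with `a = Ȳ² + A₄`,
`b = B₄`, `e = E₄`, `u = Ȳ² + C₄`, `v = D₄`. The point `(K₁*, K₂*)` solves the normal equations
`a K₁ − e K₂ = u`, `b K₂ − e K₁ = −v` by Cramer's rule, and around it `M` equals its value there
plus the positive definite form `a x² − 2 e x y + b y²`.
-/

lemma quadForm_nonneg {a b e : ℝ} (ha : 0 < a) (hΔ : 0 < a * b - e ^ 2) (x y : ℝ) :
    0 ≤ a * x ^ 2 - 2 * e * x * y + b * y ^ 2 := by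
  have hsq : a * (a * x ^ 2 - 2 * e * x * y + b * y ^ 2)
      = (a * x - e * y) ^ 2 + (a * b - e ^ 2) * y ^ 2 := by ring
  refine (mul_nonneg_iff_of_pos_left ha).mp ?_
  rw [hsq]
  positivity

lemma quadratic_eq_add_quadForm {a b e u v c x₀ y₀ : ℝ}
    (h₁ : a * x₀ - e * y₀ = u) (h₂ : b * y₀ - e * x₀ = -v) (x y : ℝ) :
    a * x ^ 2 - 2 * e * x * y + b * y ^ 2 - 2 * u * x + 2 * v * y + c
      = (c - u * x₀ + v * y₀)
        + (a * (x - x₀) ^ 2 - 2 * e * (x - x₀) * (y - y₀) + b * (y - y₀) ^ 2) := by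
  linear_combination (2 * x - x₀) * h₁ + (2 * y - y₀) * h₂

theorem isLeast_quadratic_of_normal_eqns {a b e u v c x₀ y₀ : ℝ} (ha : 0 < a)
    (hΔ : 0 < a * b - e ^ 2) (h₁ : a * x₀ - e * y₀ = u) (h₂ : b * y₀ - e * x₀ = -v) :
    IsLeast (Set.range fun p : ℝ × ℝ =>
        a * p.1 ^ 2 - 2 * e * p.1 * p.2 + b * p.2 ^ 2 - 2 * u * p.1 + 2 * v * p.2 + c)
      (c - u * x₀ + v * y₀) := by
  constructor
  · refine ⟨(x₀, y₀), ?_⟩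
    simp only [quadratic_eq_add_quadForm h₁ h₂, sub_self]
    ring
  · rintro _ ⟨⟨x, y⟩, rfl⟩
    simp only [quadratic_eq_add_quadForm h₁ h₂]
    linarith [quadForm_nonneg ha hΔ (x - x₀) (y - y₀)]

theorem t4_mse_min_value_general (Ybar A4 B4 C4 D4 E4 : ℝ)
    (hA : 0 < Ybar ^ 2 + A4) (hΔ : 0 < B4 * (Ybar ^ 2 + A4) - E4 ^ 2)
    (M : ℝ → ℝ → ℝ)
    (hM : ∀ K1 K2, M K1 K2 = Ybar ^ 2 * (K1 - 1) ^ 2 + K1 ^ 2 * A4 + K2 ^ 2 * B4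
      - 2 * K1 * C4 + 2 * K2 * D4 - 2 * K1 * K2 * E4)
    (K1s K2s : ℝ)
    (hK1 : K1s = (B4 * (Ybar ^ 2 + C4) - D4 * E4) / (B4 * (Ybar ^ 2 + A4) - E4 ^ 2))
    (hK2 : K2s = (E4 * (Ybar ^ 2 + C4) - D4 * (Ybar ^ 2 + A4)) /
      (B4 * (Ybar ^ 2 + A4) - E4 ^ 2)) :
    IsLeast (Set.range fun p : ℝ × ℝ => M p.1 p.2)
      (Ybar ^ 2 - (Ybar ^ 2 + C4) * K1s + D4 * K2s) := by
  have hΔ' : 0 < (Ybar ^ 2 + A4) * B4 - E4 ^ 2 := by linarith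
  have hΔne : B4 * (Ybar ^ 2 + A4) - E4 ^ 2 ≠ 0 := hΔ.ne'
  have h₁ : (Ybar ^ 2 + A4) * K1s - E4 * K2s = Ybar ^ 2 + C4 := by
    rw [hK1, hK2]; field_simp; ring
  have h₂ : B4 * K2s - E4 * K1s = -D4 := by
    rw [hK1, hK2]; field_simp; ring
  have hM' : (fun p : ℝ × ℝ => M p.1 p.2) = fun p =>
      (Ybar ^ 2 + A4) * p.1 ^ 2 - 2 * E4 * p.1 * p.2 + B4 * p.2 ^ 2
        - 2 * (Ybar ^ 2 + C4) * p.1 + 2 * D4 * p.2 + Ybar ^ 2 := by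
    funext p
    rw [hM]
    ring
  rw [hM']
  exact isLeast_quadratic_of_normal_eqns hA hΔ' h₁ h₂

/-- With K₁* = (B₄(Ȳ² + C₄) − D₄E₄)/Δ and
K₂* = (E₄(Ȳ² + C₄) − D₄(Ȳ² + A₄))/Δ, the minimum value of
M₄(K₁,K₂) = Ȳ²(K₁−1)² + K₁²A₄ + K₂²B₄ − 2K₁C₄ + 2K₂D₄ − 2K₁K₂E₄ over ℝ²
equals Ȳ² − (Ȳ² + C₄)K₁* + D₄K₂*. -/
theorem t4_mse_min_value (Ybar A4 B4 C4 D4 E4 : ℝ) (hY : Ybar ≠ 0) (hB : 0 < B4)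
    (hA : 0 < Ybar ^ 2 + A4) (hΔ : 0 < B4 * (Ybar ^ 2 + A4) - E4 ^ 2)
    (M : ℝ → ℝ → ℝ)
    (hM : ∀ K1 K2, M K1 K2 = Ybar ^ 2 * (K1 - 1) ^ 2 + K1 ^ 2 * A4 + K2 ^ 2 * B4
      - 2 * K1 * C4 + 2 * K2 * D4 - 2 * K1 * K2 * E4)
    (K1s K2s : ℝ)
    (hK1 : K1s = (B4 * (Ybar ^ 2 + C4) - D4 * E4) / (B4 * (Ybar ^ 2 + A4) - E4 ^ 2))
    (hK2 : K2s = (E4 * (Ybar ^ 2 + C4) - D4 * (Ybar ^ 2 + A4)) /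
      (B4 * (Ybar ^ 2 + A4) - E4 ^ 2)) :
    IsLeast (Set.range fun p : ℝ × ℝ => M p.1 p.2)
      (Ybar ^ 2 - (Ybar ^ 2 + C4) * K1s + D4 * K2s) :=
  t4_mse_min_value_general Ybar A4 B4 C4 D4 E4 hA hΔ M hM K1s K2s hK1 hK2
end

section
/- Let Ȳ ≠ 0 and A₅, B₅, C₅, D₅ be real numbers with B₅ > 0, Ȳ² + A₅ > 0, and B₅(Ȳ² + A₅) − D₅² > 0. Define M₅(K₁, K₂) = Ȳ²(K₁ − 1)² + K₁²A₅ + K₂²B₅ + 2K₁C₅ − 2K₁K₂D₅. Then M₅ attains its unique global minimum over ℝ² at K₁* = B₅(Ȳ² − C₅)/(B₅(Ȳ² + A₅) − D₅²) and K₂* = D₅(Ȳ² − C₅)/(B₅(Ȳ² + A₅) − D₅²). -/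
/-!
Up to the constant `Ȳ²`, `M₅` is the quadratic form `(Ȳ² + A₅) K₁² − 2 D₅ K₁ K₂ + B₅ K₂²` minus
the linear form `2 (Ȳ² − C₅) K₁`. The point `(K₁*, K₂*)` solves the normal equations, so expanding
about it leaves `M₅(K₁*, K₂*)` plus the quadratic form evaluated at `(K₁ − K₁*, K₂ − K₂*)`; the two
conditions `B₅ > 0` and `B₅ (Ȳ² + A₅) − D₅² > 0` make that form positive definite.
-/

/-- The binary quadratic form with Gram matrix `!![a, -d; -d, b]`. -/
def binQuad {R : Type*} [CommRing R] (a b d x y : R) : R :=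
  a * x ^ 2 - 2 * d * x * y + b * y ^ 2

theorem mul_binQuad {R : Type*} [CommRing R] (a b d x y : R) :
    b * binQuad a b d x y = (a * b - d ^ 2) * x ^ 2 + (b * y - d * x) ^ 2 := by
  unfold binQuad
  ring

theorem binQuad_sub_linear_eq {R : Type*} [CommRing R] {a b d u v x₀ y₀ : R}
    (hu : a * x₀ - d * y₀ = u) (hv : b * y₀ - d * x₀ = v) (c x y : R) :
    binQuad a b d x y - 2 * (u * x + v * y) + c =
      (binQuad a b d x₀ y₀ - 2 * (u * x₀ + v * y₀) + c) + binQuad a b d (x - x₀) (y - y₀) := by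
  subst hu hv
  unfold binQuad
  ring

section LinearOrderedField

variable {𝕜 : Type*} [Field 𝕜] [LinearOrder 𝕜] [IsStrictOrderedRing 𝕜] {a b d : 𝕜}

theorem binQuad_nonneg (hb : 0 < b) (hΔ : 0 < a * b - d ^ 2) (x y : 𝕜) :
    0 ≤ binQuad a b d x y := by
  refine nonneg_of_mul_nonneg_right ?_ hb
  rw [mul_binQuad]
  positivity

theorem binQuad_eq_zero_iff (hb : 0 < b) (hΔ : 0 < a * b - d ^ 2) {x y : 𝕜} :
    binQuad a b d x y = 0 ↔ x = 0 ∧ y = 0 := by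
  refine ⟨fun h => ?_, fun ⟨hx, hy⟩ => by simp [binQuad, hx, hy]⟩
  have hsum : (a * b - d ^ 2) * x ^ 2 + (b * y - d * x) ^ 2 = 0 := by
    rw [← mul_binQuad, h, mul_zero]
  obtain ⟨hxsq, hy⟩ := (add_eq_zero_iff_of_nonneg (by positivity) (by positivity)).mp hsum
  have hx : x = 0 :=
    pow_eq_zero_iff two_ne_zero |>.mp <| (mul_eq_zero.mp hxsq).resolve_left hΔ.ne'
  subst hx
  simpa [hb.ne'] using hy

theorem binQuad_sub_linear_min (hb : 0 < b) (hΔ : 0 < a * b - d ^ 2) {u v x₀ y₀ : 𝕜}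
    (hu : a * x₀ - d * y₀ = u) (hv : b * y₀ - d * x₀ = v) (c : 𝕜) {f : 𝕜 → 𝕜 → 𝕜}
    (hf : ∀ x y, f x y = binQuad a b d x y - 2 * (u * x + v * y) + c) :
    (∀ x y, f x₀ y₀ ≤ f x y) ∧ (∀ x y, f x y = f x₀ y₀ → x = x₀ ∧ y = y₀) := by
  have hexp (x y : 𝕜) : f x y = f x₀ y₀ + binQuad a b d (x - x₀) (y - y₀) := by
    rw [hf, hf, binQuad_sub_linear_eq hu hv]
  refine ⟨fun x y => ?_, fun x y h => ?_⟩
  · rw [hexp x y]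
    exact le_add_of_nonneg_right (binQuad_nonneg hb hΔ _ _)
  · rw [hexp x y, add_eq_left, binQuad_eq_zero_iff hb hΔ, sub_eq_zero, sub_eq_zero] at h
    exact h

end LinearOrderedField

theorem t5_mse_min_general (Ybar A5 B5 C5 D5 : ℝ) (hB : 0 < B5)
    (hΔ : 0 < B5 * (Ybar ^ 2 + A5) - D5 ^ 2)
    (M : ℝ → ℝ → ℝ)
    (hM : ∀ K1 K2, M K1 K2 = Ybar ^ 2 * (K1 - 1) ^ 2 + K1 ^ 2 * A5 + K2 ^ 2 * B5
      + 2 * K1 * C5 - 2 * K1 * K2 * D5)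
    (K1s K2s : ℝ)
    (hK1 : K1s = B5 * (Ybar ^ 2 - C5) / (B5 * (Ybar ^ 2 + A5) - D5 ^ 2))
    (hK2 : K2s = D5 * (Ybar ^ 2 - C5) / (B5 * (Ybar ^ 2 + A5) - D5 ^ 2)) :
    (∀ K1 K2, M K1s K2s ≤ M K1 K2) ∧
    (∀ K1 K2, M K1 K2 = M K1s K2s → K1 = K1s ∧ K2 = K2s) := by
  have hΔ' : 0 < (Ybar ^ 2 + A5) * B5 - D5 ^ 2 := by rwa [mul_comm] at hΔ
  have hnormal₁ : (Ybar ^ 2 + A5) * K1s - D5 * K2s = Ybar ^ 2 - C5 := by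
    rw [hK1, hK2]
    field_simp
  have hnormal₂ : B5 * K2s - D5 * K1s = 0 := by
    rw [hK1, hK2]
    ring
  refine binQuad_sub_linear_min hB hΔ' hnormal₁ hnormal₂ (Ybar ^ 2) fun K1 K2 => ?_
  rw [hM, binQuad]
  ring

/-- M₅(K₁,K₂) = Ȳ²(K₁−1)² + K₁²A₅ + K₂²B₅ + 2K₁C₅ − 2K₁K₂D₅
attains its unique global minimum at
K₁* = B₅(Ȳ² − C₅)/(B₅(Ȳ² + A₅) − D₅²),
K₂* = D₅(Ȳ² − C₅)/(B₅(Ȳ² + A₅) − D₅²). -/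
theorem t5_mse_min (Ybar A5 B5 C5 D5 : ℝ) (hY : Ybar ≠ 0) (hB : 0 < B5)
    (hA : 0 < Ybar ^ 2 + A5) (hΔ : 0 < B5 * (Ybar ^ 2 + A5) - D5 ^ 2)
    (M : ℝ → ℝ → ℝ)
    (hM : ∀ K1 K2, M K1 K2 = Ybar ^ 2 * (K1 - 1) ^ 2 + K1 ^ 2 * A5 + K2 ^ 2 * B5
      + 2 * K1 * C5 - 2 * K1 * K2 * D5)
    (K1s K2s : ℝ)
    (hK1 : K1s = B5 * (Ybar ^ 2 - C5) / (B5 * (Ybar ^ 2 + A5) - D5 ^ 2))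
    (hK2 : K2s = D5 * (Ybar ^ 2 - C5) / (B5 * (Ybar ^ 2 + A5) - D5 ^ 2)) :
    (∀ K1 K2, M K1s K2s ≤ M K1 K2) ∧
    (∀ K1 K2, M K1 K2 = M K1s K2s → K1 = K1s ∧ K2 = K2s) :=
  t5_mse_min_general Ybar A5 B5 C5 D5 hB hΔ M hM K1s K2s hK1 hK2
end

section
/- Let Ȳ ≠ 0 and A₅, B₅, C₅, D₅ be real numbers with B₅ > 0, Ȳ² + A₅ > 0, and Δ = B₅(Ȳ² + A₅) − D₅² > 0. Define M₅(K₁, K₂) = Ȳ²(K₁ − 1)² + K₁²A₅ + K₂²B₅ + 2K₁C₅ − 2K₁K₂D₅. Then the minimum value of M₅ over ℝ² equals Ȳ² − B₅(Ȳ² − C₅)²/Δ. -/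
/-! Rewritten in the variables `K₁, K₂`, the mean squared error is the quadratic
`(Ȳ² + A₅) K₁² + B₅ K₂² − 2 D₅ K₁ K₂ − 2 (Ȳ² − C₅) K₁ + Ȳ²`. Completing the square first in `K₂`
and then in `K₁` writes it as its claimed minimum plus
`(B₅ K₂ − D₅ K₁)² / B₅ + (Δ K₁ − B₅ (Ȳ² − C₅))² / (B₅ Δ)`, a sum of two squares with positive
weights which vanishes at `K₁ = B₅ (Ȳ² − C₅) / Δ`, `K₂ = D₅ (Ȳ² − C₅) / Δ`. -/

namespace BinaryQuadratic

variable {a b d e f : ℝ}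

theorem eq_add_sq_div_add_sq_div (hb : b ≠ 0) (hΔ : b * a - d ^ 2 ≠ 0) (x y : ℝ) :
    a * x ^ 2 + b * y ^ 2 - 2 * d * x * y - 2 * e * x + f
      = f - b * e ^ 2 / (b * a - d ^ 2) + (b * y - d * x) ^ 2 / b
        + ((b * a - d ^ 2) * x - b * e) ^ 2 / (b * (b * a - d ^ 2)) := by
  -- with `a` eliminated in favour of `Δ`, `field_simp` can clear the denominator `Δ`
  generalize hD : b * a - d ^ 2 = Δ at *
  obtain rfl : a = (Δ + d ^ 2) / b := by rw [← hD]; field_simp; ring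
  field_simp
  ring

theorem isLeast_range (hb : 0 < b) (hΔ : 0 < b * a - d ^ 2) :
    IsLeast (Set.range fun p : ℝ × ℝ => a * p.1 ^ 2 + b * p.2 ^ 2 - 2 * d * p.1 * p.2
        - 2 * e * p.1 + f)
      (f - b * e ^ 2 / (b * a - d ^ 2)) := by
  refine ⟨⟨(b * e / (b * a - d ^ 2), d * e / (b * a - d ^ 2)), ?_⟩, ?_⟩
  · dsimp only
    rw [eq_add_sq_div_add_sq_div hb.ne' hΔ.ne']
    field_simp
    ring
  · rintro _ ⟨⟨x, y⟩, rfl⟩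
    dsimp only
    rw [eq_add_sq_div_add_sq_div hb.ne' hΔ.ne']
    have h₁ : 0 ≤ (b * y - d * x) ^ 2 / b := by positivity
    have h₂ : 0 ≤ ((b * a - d ^ 2) * x - b * e) ^ 2 / (b * (b * a - d ^ 2)) := by positivity
    linarith

end BinaryQuadratic

theorem t5_mse_min_value_general (Ybar A5 B5 C5 D5 : ℝ) (hB : 0 < B5)
    (hΔ : 0 < B5 * (Ybar ^ 2 + A5) - D5 ^ 2)
    (M : ℝ → ℝ → ℝ)
    (hM : ∀ K1 K2, M K1 K2 = Ybar ^ 2 * (K1 - 1) ^ 2 + K1 ^ 2 * A5 + K2 ^ 2 * B5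
      + 2 * K1 * C5 - 2 * K1 * K2 * D5) :
    IsLeast (Set.range fun p : ℝ × ℝ => M p.1 p.2)
      (Ybar ^ 2 - B5 * (Ybar ^ 2 - C5) ^ 2 / (B5 * (Ybar ^ 2 + A5) - D5 ^ 2)) := by
  have hM_expand : (fun p : ℝ × ℝ => M p.1 p.2) = fun p => (Ybar ^ 2 + A5) * p.1 ^ 2 + B5 * p.2 ^ 2
      - 2 * D5 * p.1 * p.2 - 2 * (Ybar ^ 2 - C5) * p.1 + Ybar ^ 2 := by
    funext p
    rw [hM]
    ring
  rw [hM_expand]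
  exact BinaryQuadratic.isLeast_range hB hΔ

/-- The minimum value of
M₅(K₁,K₂) = Ȳ²(K₁−1)² + K₁²A₅ + K₂²B₅ + 2K₁C₅ − 2K₁K₂D₅ over ℝ²
equals Ȳ² − B₅(Ȳ² − C₅)²/Δ, where Δ = B₅(Ȳ² + A₅) − D₅². -/
theorem t5_mse_min_value (Ybar A5 B5 C5 D5 : ℝ) (hY : Ybar ≠ 0) (hB : 0 < B5)
    (hA : 0 < Ybar ^ 2 + A5) (hΔ : 0 < B5 * (Ybar ^ 2 + A5) - D5 ^ 2)
    (M : ℝ → ℝ → ℝ)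
    (hM : ∀ K1 K2, M K1 K2 = Ybar ^ 2 * (K1 - 1) ^ 2 + K1 ^ 2 * A5 + K2 ^ 2 * B5
      + 2 * K1 * C5 - 2 * K1 * K2 * D5) :
    IsLeast (Set.range fun p : ℝ × ℝ => M p.1 p.2)
      (Ybar ^ 2 - B5 * (Ybar ^ 2 - C5) ^ 2 / (B5 * (Ybar ^ 2 + A5) - D5 ^ 2)) :=
  t5_mse_min_value_general Ybar A5 B5 C5 D5 hB hΔ M hM
end

section
/- Let Ȳ ≠ 0 and A₆, B₆, C₆, D₆ be real numbers with B₆ > 0, Ȳ² + A₆ > 0, and B₆(Ȳ² + A₆) − D₆² > 0. Define M₆(K₁, K₂) = Ȳ²(K₁ − 1)² + K₁²A₆ + K₂²B₆ − 2K₁C₆ − 2K₁K₂D₆. Then M₆ attains its unique global minimum over ℝ² at K₁* = B₆(Ȳ² + C₆)/(B₆(Ȳ² + A₆) − D₆²) and K₂* = D₆(Ȳ² + C₆)/(B₆(Ȳ² + A₆) − D₆²). -/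
/-!
Writing `M` as the quadratic polynomial `a K₁² − 2 b K₁ K₂ + c K₂² − 2 p K₁ + Ȳ²` with
`a = Ȳ² + A₆`, `b = D₆`, `c = B₆`, `p = Ȳ² + C₆`, the point `(K₁*, K₂*)` is its critical point,
so `M − M(K₁*, K₂*)` is the quadratic form `a u² − 2 b u v + c v²` in the displacement
`(u, v) = (K₁ − K₁*, K₂ − K₂*)`. Since `c (a u² − 2 b u v + c v²) = (c v − b u)² + (a c − b²) u²`,
this form is positive definite when `c > 0` and `a c − b² > 0`.
-/

namespace BinaryQuadratic

def form (a b c u v : ℝ) : ℝ := a * u ^ 2 - 2 * b * u * v + c * v ^ 2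

theorem mul_form_eq (a b c u v : ℝ) :
    c * form a b c u v = (c * v - b * u) ^ 2 + (a * c - b ^ 2) * u ^ 2 := by
  unfold form; ring

variable {a b c : ℝ}

theorem form_nonneg (hc : 0 < c) (hdisc : 0 ≤ a * c - b ^ 2) (u v : ℝ) :
    0 ≤ form a b c u v := by
  have h := mul_form_eq a b c u v
  have : 0 ≤ c * form a b c u v := by rw [h]; positivity
  exact nonneg_of_mul_nonneg_right (by linarith) hc

theorem form_eq_zero_iff (hc : 0 < c) (hdisc : 0 < a * c - b ^ 2) {u v : ℝ} :
    form a b c u v = 0 ↔ u = 0 ∧ v = 0 := by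
  refine ⟨fun h => ?_, fun ⟨hu, hv⟩ => by simp [form, hu, hv]⟩
  have hsum : (c * v - b * u) ^ 2 + (a * c - b ^ 2) * u ^ 2 = 0 := by
    rw [← mul_form_eq, h, mul_zero]
  have hu : u = 0 := by
    have : (a * c - b ^ 2) * u ^ 2 = 0 := by nlinarith [sq_nonneg (c * v - b * u), sq_nonneg u]
    simpa [hdisc.ne'] using this
  have hv : c * v = 0 := by simpa [hu] using hsum
  exact ⟨hu, by simpa [hc.ne'] using hv⟩

def poly (a b c p q x y : ℝ) : ℝ := form a b c x y - 2 * p * x - 2 * q * y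

-- The critical point of `poly a b c p q`: the solution of `a x − b y = p`, `c y − b x = q`.
noncomputable def critX (a b c p q : ℝ) : ℝ := (c * p + b * q) / (a * c - b ^ 2)

noncomputable def critY (a b c p q : ℝ) : ℝ := (b * p + a * q) / (a * c - b ^ 2)

theorem poly_sub_poly_crit (hdisc : a * c - b ^ 2 ≠ 0) (p q x y : ℝ) :
    poly a b c p q x y - poly a b c p q (critX a b c p q) (critY a b c p q) =
      form a b c (x - critX a b c p q) (y - critY a b c p q) := by
  unfold poly form critX critY
  field_simp
  ring

theorem poly_crit_le (hc : 0 < c) (hdisc : 0 < a * c - b ^ 2) (p q x y : ℝ) :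
    poly a b c p q (critX a b c p q) (critY a b c p q) ≤ poly a b c p q x y := by
  have := poly_sub_poly_crit hdisc.ne' p q x y
  linarith [form_nonneg hc hdisc.le (x - critX a b c p q) (y - critY a b c p q)]

theorem eq_crit_of_poly_eq (hc : 0 < c) (hdisc : 0 < a * c - b ^ 2) {p q x y : ℝ}
    (h : poly a b c p q x y = poly a b c p q (critX a b c p q) (critY a b c p q)) :
    x = critX a b c p q ∧ y = critY a b c p q := by
  have hform := poly_sub_poly_crit hdisc.ne' p q x y
  rw [h, sub_self, eq_comm, form_eq_zero_iff hc hdisc] at hform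
  exact ⟨sub_eq_zero.mp hform.1, sub_eq_zero.mp hform.2⟩

end BinaryQuadratic

open BinaryQuadratic

theorem t6_mse_min_general (Ybar A6 B6 C6 D6 : ℝ) (hB : 0 < B6)
    (hΔ : 0 < B6 * (Ybar ^ 2 + A6) - D6 ^ 2)
    (M : ℝ → ℝ → ℝ)
    (hM : ∀ K1 K2, M K1 K2 = Ybar ^ 2 * (K1 - 1) ^ 2 + K1 ^ 2 * A6 + K2 ^ 2 * B6
      - 2 * K1 * C6 - 2 * K1 * K2 * D6)
    (K1s K2s : ℝ)
    (hK1 : K1s = B6 * (Ybar ^ 2 + C6) / (B6 * (Ybar ^ 2 + A6) - D6 ^ 2))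
    (hK2 : K2s = D6 * (Ybar ^ 2 + C6) / (B6 * (Ybar ^ 2 + A6) - D6 ^ 2)) :
    (∀ K1 K2, M K1s K2s ≤ M K1 K2) ∧
    (∀ K1 K2, M K1 K2 = M K1s K2s → K1 = K1s ∧ K2 = K2s) := by
  set a := Ybar ^ 2 + A6
  set p := Ybar ^ 2 + C6
  have hdisc : 0 < a * B6 - D6 ^ 2 := by linarith
  have hM_poly : ∀ K1 K2, M K1 K2 = poly a D6 B6 p 0 K1 K2 + Ybar ^ 2 := by
    intro K1 K2; rw [hM]; unfold poly form; ring
  have hK1s : K1s = critX a D6 B6 p 0 := by rw [hK1, critX]; ring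
  have hK2s : K2s = critY a D6 B6 p 0 := by rw [hK2, critY]; ring
  simp only [hM_poly, hK1s, hK2s, add_le_add_iff_right, add_left_inj]
  exact ⟨fun K1 K2 => poly_crit_le hB hdisc p 0 K1 K2,
    fun K1 K2 h => eq_crit_of_poly_eq hB hdisc h⟩

/-- M₆(K₁,K₂) = Ȳ²(K₁−1)² + K₁²A₆ + K₂²B₆ − 2K₁C₆ − 2K₁K₂D₆
attains its unique global minimum at
K₁* = B₆(Ȳ² + C₆)/(B₆(Ȳ² + A₆) − D₆²),
K₂* = D₆(Ȳ² + C₆)/(B₆(Ȳ² + A₆) − D₆²). -/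
theorem t6_mse_min (Ybar A6 B6 C6 D6 : ℝ) (hY : Ybar ≠ 0) (hB : 0 < B6)
    (hA : 0 < Ybar ^ 2 + A6) (hΔ : 0 < B6 * (Ybar ^ 2 + A6) - D6 ^ 2)
    (M : ℝ → ℝ → ℝ)
    (hM : ∀ K1 K2, M K1 K2 = Ybar ^ 2 * (K1 - 1) ^ 2 + K1 ^ 2 * A6 + K2 ^ 2 * B6
      - 2 * K1 * C6 - 2 * K1 * K2 * D6)
    (K1s K2s : ℝ)
    (hK1 : K1s = B6 * (Ybar ^ 2 + C6) / (B6 * (Ybar ^ 2 + A6) - D6 ^ 2))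
    (hK2 : K2s = D6 * (Ybar ^ 2 + C6) / (B6 * (Ybar ^ 2 + A6) - D6 ^ 2)) :
    (∀ K1 K2, M K1s K2s ≤ M K1 K2) ∧
    (∀ K1 K2, M K1 K2 = M K1s K2s → K1 = K1s ∧ K2 = K2s) :=
  t6_mse_min_general Ybar A6 B6 C6 D6 hB hΔ M hM K1s K2s hK1 hK2
end

section
/- Let Ȳ ≠ 0 and A₆, B₆, C₆, D₆ be real numbers with B₆ > 0, Ȳ² + A₆ > 0, and Δ = B₆(Ȳ² + A₆) − D₆² > 0. Define M₆(K₁, K₂) = Ȳ²(K₁ − 1)² + K₁²A₆ + K₂²B₆ − 2K₁C₆ − 2K₁K₂D₆. Then the minimum value of M₆ over ℝ² equals Ȳ² − B₆(Ȳ² + C₆)²/Δ; in particular, the minimum value is strictly less than Ȳ² whenever Ȳ² + C₆ ≠ 0. -/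
/-!
Completing the square twice: first in `K₂`, then in `K₁`, writes `M₆` as its claimed minimum
plus `B₆ (K₂ - D₆ K₁ / B₆)² + (Δ / B₆) (K₁ - B₆ (Ȳ² + C₆) / Δ)²`, a sum of two squares with
positive weights that vanishes at `K₁ = B₆ (Ȳ² + C₆) / Δ`, `K₂ = D₆ (Ȳ² + C₆) / Δ`.
-/

section BinaryQuadratic

variable {a b c d e : ℝ}

theorem binaryQuadratic_eq_add_sq (hb : b ≠ 0) (hΔ : b * a - c ^ 2 ≠ 0) (x y : ℝ) :
    a * x ^ 2 + b * y ^ 2 - 2 * c * x * y - 2 * d * x + e =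
      e - b * d ^ 2 / (b * a - c ^ 2) + b * (y - c * x / b) ^ 2 +
        (b * a - c ^ 2) / b * (x - b * d / (b * a - c ^ 2)) ^ 2 := by
  set Δ := b * a - c ^ 2 with hΔ_def
  field_simp
  rw [hΔ_def]
  ring

theorem isLeast_range_binaryQuadratic (hb : 0 < b) (hΔ : 0 < b * a - c ^ 2) :
    IsLeast (Set.range fun p : ℝ × ℝ => a * p.1 ^ 2 + b * p.2 ^ 2 - 2 * c * p.1 * p.2
        - 2 * d * p.1 + e)
      (e - b * d ^ 2 / (b * a - c ^ 2)) := by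
  refine ⟨⟨(b * d / (b * a - c ^ 2), c * d / (b * a - c ^ 2)), ?_⟩, ?_⟩
  · dsimp only
    rw [binaryQuadratic_eq_add_sq hb.ne' hΔ.ne']
    field_simp
    ring
  · rintro _ ⟨⟨x, y⟩, rfl⟩
    dsimp only
    rw [binaryQuadratic_eq_add_sq hb.ne' hΔ.ne']
    have hy : 0 ≤ b * (y - c * x / b) ^ 2 := by positivity
    have hx : 0 ≤ (b * a - c ^ 2) / b * (x - b * d / (b * a - c ^ 2)) ^ 2 := by positivity
    linarith

end BinaryQuadratic

theorem t6_mse_min_value_general (Ybar A6 B6 C6 D6 : ℝ) (hB : 0 < B6)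
    (hΔ : 0 < B6 * (Ybar ^ 2 + A6) - D6 ^ 2)
    (M : ℝ → ℝ → ℝ)
    (hM : ∀ K1 K2, M K1 K2 = Ybar ^ 2 * (K1 - 1) ^ 2 + K1 ^ 2 * A6 + K2 ^ 2 * B6
      - 2 * K1 * C6 - 2 * K1 * K2 * D6) :
    IsLeast (Set.range fun p : ℝ × ℝ => M p.1 p.2)
      (Ybar ^ 2 - B6 * (Ybar ^ 2 + C6) ^ 2 / (B6 * (Ybar ^ 2 + A6) - D6 ^ 2)) ∧
    (Ybar ^ 2 + C6 ≠ 0 →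
      Ybar ^ 2 - B6 * (Ybar ^ 2 + C6) ^ 2 / (B6 * (Ybar ^ 2 + A6) - D6 ^ 2)
        < Ybar ^ 2) := by
  have hM_quadratic : (fun p : ℝ × ℝ => M p.1 p.2) = fun p => (Ybar ^ 2 + A6) * p.1 ^ 2
      + B6 * p.2 ^ 2 - 2 * D6 * p.1 * p.2 - 2 * (Ybar ^ 2 + C6) * p.1 + Ybar ^ 2 := by
    funext p
    rw [hM]
    ring
  refine ⟨hM_quadratic ▸ isLeast_range_binaryQuadratic hB hΔ, fun hC => sub_lt_self _ ?_⟩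
  exact div_pos (mul_pos hB (sq_pos_of_ne_zero hC)) hΔ

/-- The minimum value of
M₆(K₁,K₂) = Ȳ²(K₁−1)² + K₁²A₆ + K₂²B₆ − 2K₁C₆ − 2K₁K₂D₆ over ℝ²
equals Ȳ² − B₆(Ȳ² + C₆)²/Δ with Δ = B₆(Ȳ² + A₆) − D₆²; moreover it is strictly
less than Ȳ² whenever Ȳ² + C₆ ≠ 0. -/
theorem t6_mse_min_value (Ybar A6 B6 C6 D6 : ℝ) (hY : Ybar ≠ 0) (hB : 0 < B6)
    (hA : 0 < Ybar ^ 2 + A6) (hΔ : 0 < B6 * (Ybar ^ 2 + A6) - D6 ^ 2)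
    (M : ℝ → ℝ → ℝ)
    (hM : ∀ K1 K2, M K1 K2 = Ybar ^ 2 * (K1 - 1) ^ 2 + K1 ^ 2 * A6 + K2 ^ 2 * B6
      - 2 * K1 * C6 - 2 * K1 * K2 * D6) :
    IsLeast (Set.range fun p : ℝ × ℝ => M p.1 p.2)
      (Ybar ^ 2 - B6 * (Ybar ^ 2 + C6) ^ 2 / (B6 * (Ybar ^ 2 + A6) - D6 ^ 2)) ∧
    (Ybar ^ 2 + C6 ≠ 0 →
      Ybar ^ 2 - B6 * (Ybar ^ 2 + C6) ^ 2 / (B6 * (Ybar ^ 2 + A6) - D6 ^ 2)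
        < Ybar ^ 2) :=
  t6_mse_min_value_general Ybar A6 B6 C6 D6 hB hΔ M hM
end
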